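/- arXiv:1402.0186 — 4 statements merged into one kernel-verified Lean document; each statement's English description precedes it below -/
import Mathlib

section
/- Let H be a topological group, Y a locally convex space, h : H → Y continuous, and X : ℝ → H a continuous one-parameter subgroup such that the derivative (D_X h)(g) := lim_{t→0} (h(g·X(t)) − h(g))/t exists for all g ∈ H and defines a continuous function D_X h : H → Y. Then there is a continuous function χ : ℝ × H → Y with χ(0,g) = 0 and h(g·X(t)) = h(g) + t·(D_X h)(g) + t·χ(t,g) for all t ∈ ℝ, g ∈ H. -/
set_option linter.unusedSectionVars false

open Filter Topology Set

section OneParamDefs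

variable (G : Type*) [Group G] [TopologicalSpace G] [IsTopologicalGroup G]

/-- The set of continuous one-parameter subgroups of `G`, as a subset of `C(ℝ, G)`
(the latter carrying the compact-open topology, i.e. the topology of uniform
convergence on compact subsets of `ℝ`). -/
def OneParam : Set C(ℝ, G) := {γ | ∀ t s : ℝ, γ (t + s) = γ t * γ s}

variable {G}

/-- The trivial one-parameter subgroup. -/
def oneOP : ↥(OneParam G) := ⟨⟨fun _ => 1, continuous_const⟩, fun _ _ => by simp⟩

/-- The adjoint action of `G` on its one-parameter subgroups. -/
def adOP (g : G) (γ : ↥(OneParam G)) : ↥(OneParam G) :=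
  ⟨⟨fun t => g * γ.1 t * g⁻¹, by fun_prop⟩, fun t s => by
    simp only [ContinuousMap.coe_mk, γ.2 t s]; group⟩

/-- Pairing of one-parameter subgroups of `H` and `G` into a one-parameter
subgroup of `H × G`. -/
def prodOP {H : Type*} [Group H] [TopologicalSpace H] [IsTopologicalGroup H]
    (β : ↥(OneParam H)) (γ : ↥(OneParam G)) : ↥(OneParam (H × G)) :=
  ⟨⟨fun t => (β.1 t, γ.1 t), by fun_prop⟩, fun t s => by
    simp only [ContinuousMap.coe_mk, β.2 t s, γ.2 t s]; rfl⟩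

end OneParamDefs

section Smoothness

variable {G : Type*} [Group G] [TopologicalSpace G] [IsTopologicalGroup G]
variable {Y : Type*} [AddCommGroup Y] [Module ℝ Y] [TopologicalSpace Y]

/-- `φ` has derivative `v` at `g` along the one-parameter subgroup `γ`. -/
def HasLieDeriv (φ : G → Y) (γ : ↥(OneParam G)) (g : G) (v : Y) : Prop :=
  Tendsto (fun t : ℝ => t⁻¹ • (φ (g * γ.1 t) - φ g)) (𝓝[≠] (0 : ℝ)) (𝓝 v)

/-- `F` is a coherent family of iterated derivatives of `φ` up to order `n`:
`F k g (γ₁, …, γ_k) = (D^λ_{γ_k} ⋯ D^λ_{γ₁} φ)(g)`, each of them jointly continuous. -/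
def CnSeq (n : ℕ) (φ : G → Y) (F : ∀ k : ℕ, G → (Fin k → ↥(OneParam G)) → Y) : Prop :=
  (∀ g γ, F 0 g γ = φ g) ∧
  (∀ k, k < n → ∀ (g : G) (γ : Fin (k + 1) → ↥(OneParam G)),
      HasLieDeriv (fun h => F k h fun i => γ i.castSucc) (γ (Fin.last k)) g (F (k + 1) g γ)) ∧
  (∀ k, k ≤ n → Continuous fun p : G × (Fin k → ↥(OneParam G)) => F k p.1 p.2)

/-- `F` is a coherent family of iterated derivatives of `φ` of all orders. -/
def SmoothSeq (φ : G → Y) (F : ∀ k : ℕ, G → (Fin k → ↥(OneParam G)) → Y) : Prop :=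
  ∀ n, CnSeq n φ F

/-- `φ ∈ C^∞(G, Y)`: all iterated derivatives along continuous one-parameter subgroups
exist and are jointly continuous. -/
def IsCInf (φ : G → Y) : Prop := ∃ F, SmoothSeq φ F

theorem HasLieDeriv.add' [ContinuousAdd Y] {φ ψ : G → Y} {γ : ↥(OneParam G)} {g : G} {v w : Y}
    (h1 : HasLieDeriv φ γ g v) (h2 : HasLieDeriv ψ γ g w) :
    HasLieDeriv (fun x => φ x + ψ x) γ g (v + w) := by
  refine (h1.add h2).congr fun t => ?_
  simp only [smul_sub, smul_add]
  abel

theorem HasLieDeriv.const_smul' {𝕜 : Type*} [Monoid 𝕜] [DistribMulAction 𝕜 Y]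
    [SMulCommClass ℝ 𝕜 Y] [ContinuousConstSMul 𝕜 Y]
    {φ : G → Y} {γ : ↥(OneParam G)} {g : G} {v : Y} (c : 𝕜) (h : HasLieDeriv φ γ g v) :
    HasLieDeriv (fun x => c • φ x) γ g (c • v) := by
  haveI := SMulCommClass.symm ℝ 𝕜 Y
  refine (h.const_smul c).congr fun t => ?_
  show c • (t⁻¹ • (φ (g * γ.1 t) - φ g)) = t⁻¹ • (c • φ (g * γ.1 t) - c • φ g)
  rw [← smul_sub, smul_comm]

theorem SmoothSeq.addSeq [ContinuousAdd Y] {φ ψ : G → Y} {F F'}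
    (hF : SmoothSeq φ F) (hF' : SmoothSeq ψ F') :
    SmoothSeq (φ + ψ) (fun k g γ => F k g γ + F' k g γ) := by
  intro n
  refine ⟨fun g γ => by
    show F 0 g γ + F' 0 g γ = (φ + ψ) g
    rw [(hF n).1 g γ, (hF' n).1 g γ]; rfl, fun k hk g γ => ?_,
    fun k hk => ((hF n).2.2 k hk).add ((hF' n).2.2 k hk)⟩
  exact ((hF n).2.1 k hk g γ).add' ((hF' n).2.1 k hk g γ)

theorem SmoothSeq.smulSeq {𝕜 : Type*} [Monoid 𝕜] [DistribMulAction 𝕜 Y]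
    [SMulCommClass ℝ 𝕜 Y] [ContinuousConstSMul 𝕜 Y] {φ : G → Y} {F}
    (c : 𝕜) (hF : SmoothSeq φ F) :
    SmoothSeq (c • φ) (fun k g γ => c • F k g γ) := by
  intro n
  refine ⟨fun g γ => by
    show c • F 0 g γ = (c • φ) g
    rw [(hF n).1 g γ]; rfl, fun k hk g γ => ?_,
    fun k hk => ((hF n).2.2 k hk).const_smul c⟩
  exact ((hF n).2.1 k hk g γ).const_smul' c

theorem SmoothSeq.zeroSeq : SmoothSeq (0 : G → Y) (fun _ _ _ => 0) := by
  intro n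
  refine ⟨fun _ _ => rfl, fun k hk g γ => ?_, fun k hk => continuous_const⟩
  have : (fun t : ℝ => t⁻¹ • ((0 : Y) - 0)) = fun _ => (0 : Y) := by
    funext t; simp
  simpa [HasLieDeriv, this] using tendsto_const_nhds

theorem SmoothSeq.unique [T2Space Y] {φ : G → Y} {F F'}
    (hF : SmoothSeq φ F) (hF' : SmoothSeq φ F') : F = F' := by
  have key : ∀ k, F k = F' k := by
    intro k
    induction k with
    | zero => funext g γ; rw [(hF 0).1 g γ, (hF' 0).1 g γ]
    | succ k ih =>
      funext g γ
      have h1 := (hF (k + 1)).2.1 k (Nat.lt_succ_self k) g γ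
      have h2 := (hF' (k + 1)).2.1 k (Nat.lt_succ_self k) g γ
      rw [ih] at h1
      exact tendsto_nhds_unique h1 h2
  funext k; exact key k

end Smoothness

section Carrier

variable (𝕜 : Type*) [Ring 𝕜]
variable (G : Type*) [Group G] [TopologicalSpace G] [IsTopologicalGroup G]
variable (Y : Type*) [AddCommGroup Y] [Module ℝ Y] [TopologicalSpace Y] [ContinuousAdd Y]
  [Module 𝕜 Y] [SMulCommClass ℝ 𝕜 Y] [ContinuousConstSMul 𝕜 Y]

/-- The space `E(G, Y) = C^∞(G, Y)` of smooth `Y`-valued functions on `G`,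
as a submodule of `G → Y`. -/
def SmoothCarrier : Submodule 𝕜 (G → Y) where
  carrier := {φ | IsCInf φ}
  add_mem' := by
    rintro φ ψ ⟨F, hF⟩ ⟨F', hF'⟩
    exact ⟨_, hF.addSeq hF'⟩
  zero_mem' := ⟨_, SmoothSeq.zeroSeq⟩
  smul_mem' := by
    rintro c φ ⟨F, hF⟩
    exact ⟨_, hF.smulSeq c⟩

variable {𝕜 G Y}

theorem mem_smoothCarrier {φ : G → Y} : φ ∈ SmoothCarrier 𝕜 G Y ↔ IsCInf φ := Iff.rfl

end Carrier
section Topology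

variable (𝕜 : Type*) [Ring 𝕜]
variable (G : Type*) [Group G] [TopologicalSpace G] [IsTopologicalGroup G]
variable (Y : Type*) [AddCommGroup Y] [Module ℝ Y] [UniformSpace Y] [ContinuousAdd Y]
  [Module 𝕜 Y] [SMulCommClass ℝ 𝕜 Y] [ContinuousConstSMul 𝕜 Y]

variable {G Y}

/-- The (canonical choice of the) family of iterated derivatives of a function `φ`,
nonzero only when `φ` is smooth. -/
noncomputable def itD (φ : G → Y) : ∀ k : ℕ, G → (Fin k → ↥(OneParam G)) → Y :=
  @dite _ (IsCInf φ) (Classical.dec _) (fun h => h.choose) (fun _ => fun _ _ _ => 0)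

theorem itD_smoothSeq {φ : G → Y} (h : IsCInf φ) : SmoothSeq φ (itD φ) := by
  unfold itD
  rw [dif_pos h]
  exact h.choose_spec

theorem itD_spec [T2Space Y] {φ : G → Y} {F} (h : SmoothSeq φ F) : itD φ = F :=
  SmoothSeq.unique (itD_smoothSeq ⟨F, h⟩) h

variable (G Y) in
/-- The uniform structure of the topology on `E(G, Y) = C^∞(G, Y)` determined by
the seminorms `p_{K₁,K₂}`: uniform convergence of all iterated derivatives on
compact subsets of `G × L(G)^k`, `k ∈ ℕ`. -/
noncomputable def smoothUniform : UniformSpace ↥(SmoothCarrier 𝕜 G Y) :=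
  UniformSpace.comap
    (fun f : ↥(SmoothCarrier 𝕜 G Y) => fun k : ℕ =>
      UniformOnFun.ofFun {S : Set (G × (Fin k → ↥(OneParam G))) | IsCompact S}
        fun p => itD (f : G → Y) k p.1 p.2)
    inferInstance

variable (G Y) in
/-- The topology on `E(G, Y) = C^∞(G, Y)` of uniform convergence of all iterated
derivatives on compact subsets of `G × L(G)^k`. -/
noncomputable abbrev smoothTop : TopologicalSpace ↥(SmoothCarrier 𝕜 G Y) :=
  (smoothUniform 𝕜 G Y).toTopologicalSpace

end Topology
section Instances

variable {𝕜 : Type*} [Ring 𝕜]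
variable {G : Type*} [Group G] [TopologicalSpace G] [IsTopologicalGroup G]
variable {Y : Type*} [AddCommGroup Y] [Module ℝ Y] [UniformSpace Y] [ContinuousAdd Y]
  [Module 𝕜 Y] [SMulCommClass ℝ 𝕜 Y] [ContinuousConstSMul 𝕜 Y]

theorem itD_add [T2Space Y] (f g : ↥(SmoothCarrier 𝕜 G Y)) :
    itD ((f + g : ↥(SmoothCarrier 𝕜 G Y)) : G → Y)
      = fun k x γ => itD (f : G → Y) k x γ + itD (g : G → Y) k x γ :=
  itD_spec ((itD_smoothSeq f.2).addSeq (itD_smoothSeq g.2))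

theorem itD_smul [T2Space Y] (c : 𝕜) (f : ↥(SmoothCarrier 𝕜 G Y)) :
    itD ((c • f : ↥(SmoothCarrier 𝕜 G Y)) : G → Y)
      = fun k x γ => c • itD (f : G → Y) k x γ :=
  itD_spec ((itD_smoothSeq f.2).smulSeq c)

theorem smooth_continuousAdd [T2Space Y] [IsUniformAddGroup Y] :
    @ContinuousAdd ↥(SmoothCarrier 𝕜 G Y) (smoothTop 𝕜 G Y) _ := by
  letI τ : TopologicalSpace ↥(SmoothCarrier 𝕜 G Y) := smoothTop 𝕜 G Y
  set Φ := fun f : ↥(SmoothCarrier 𝕜 G Y) => fun k : ℕ =>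
      UniformOnFun.ofFun {S : Set (G × (Fin k → ↥(OneParam G))) | IsCompact S}
        (fun p => itD (f : G → Y) k p.1 p.2) with hΦdef
  have hind : IsInducing Φ := ⟨rfl⟩
  constructor
  rw [hind.continuous_iff]
  have heq : (Φ ∘ fun p : ↥(SmoothCarrier 𝕜 G Y) × ↥(SmoothCarrier 𝕜 G Y) => p.1 + p.2)
      = fun p => Φ p.1 + Φ p.2 := by
    funext p
    simp only [Function.comp_apply, hΦdef, itD_add p.1 p.2]
    rfl
  rw [heq]
  exact (hind.continuous.comp continuous_fst).add (hind.continuous.comp continuous_snd)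

theorem smooth_continuousConstSMul [T2Space Y] [IsUniformAddGroup Y] :
    @ContinuousConstSMul 𝕜 ↥(SmoothCarrier 𝕜 G Y) (smoothTop 𝕜 G Y) _ := by
  letI τ : TopologicalSpace ↥(SmoothCarrier 𝕜 G Y) := smoothTop 𝕜 G Y
  haveI : UniformContinuousConstSMul 𝕜 Y :=
    uniformContinuousConstSMul_of_continuousConstSMul 𝕜 Y
  set Φ := fun f : ↥(SmoothCarrier 𝕜 G Y) => fun k : ℕ =>
      UniformOnFun.ofFun {S : Set (G × (Fin k → ↥(OneParam G))) | IsCompact S}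
        (fun p => itD (f : G → Y) k p.1 p.2) with hΦdef
  have hind : IsInducing Φ := ⟨rfl⟩
  refine ⟨fun c => ?_⟩
  rw [hind.continuous_iff]
  have heq : (Φ ∘ fun f : ↥(SmoothCarrier 𝕜 G Y) => c • f)
      = fun f => fun k : ℕ =>
        (UniformOnFun.ofFun _ ∘ (((c • ·) : Y → Y) ∘ ·) ∘ UniformOnFun.toFun _) (Φ f k) := by
    funext f
    simp only [Function.comp_apply, hΦdef, itD_smul c f]
    rfl
  rw [heq]
  refine continuous_pi fun k => ?_
  exact ((UniformOnFun.postcomp_uniformContinuous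
    (uniformContinuous_const_smul c)).continuous).comp
      ((continuous_apply k).comp hind.continuous)

end Instances
section ComplexValued

variable (G : Type*) [Group G] [TopologicalSpace G] [IsTopologicalGroup G]

/-- `E(G) = C^∞(G) = C^∞(G, ℂ)`, as a `ℂ`-submodule of `G → ℂ`. -/
noncomputable abbrev EC := ↥(SmoothCarrier ℂ G ℂ)

variable {G}

/-- The convolution `f ∗ u` of a function `f` with a (compactly supported) distribution `u`:
`(f ∗ u)(x) = ǔ(f ∘ L_x)`, where `ǔ(φ) = u(φ̌)` and `φ̌(y) = φ(y⁻¹)`.  (Junk value `0`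
at points where `y ↦ f(x y⁻¹)` fails to be smooth.) -/
noncomputable def convFn (u : EC G → ℂ) (f : G → ℂ) : G → ℂ := fun x =>
  @dite _ (IsCInf fun y => f (x * y⁻¹)) (Classical.dec _)
    (fun h => u ⟨fun y => f (x * y⁻¹), h⟩) (fun _ => 0)

/-- `f̌`, where `f̌(y) = f(y⁻¹)`, as an element of `E(G)` (junk value `0` if it fails
to be smooth, which never happens). -/
noncomputable def checkE (f : EC G) : EC G :=
  @dite _ (IsCInf fun y => (f : G → ℂ) y⁻¹) (Classical.dec _)
    (fun h => ⟨fun y => (f : G → ℂ) y⁻¹, h⟩) (fun _ => 0)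

/-- The left translate `f ∘ L_x`, as an element of `E(G)` (junk value `0` if it fails
to be smooth, which never happens). -/
noncomputable def translE (x : G) (f : EC G) : EC G :=
  @dite _ (IsCInf fun y => (f : G → ℂ) (x * y)) (Classical.dec _)
    (fun h => ⟨fun y => (f : G → ℂ) (x * y), h⟩) (fun _ => 0)

/-- The support of a distribution `u` on `G`: the set of points `x` such that every
neighborhood `U` of `x` supports some smooth function `f` with `u(f) ≠ 0`. -/
def distSupp (u : EC G → ℂ) : Set G :=
  {x | ∀ U ∈ 𝓝 x, ∃ f : EC G, tsupport (f : G → ℂ) ⊆ U ∧ u f ≠ 0}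

/-- `D` is a local operator: it does not increase supports. -/
def IsLocalOp (D : EC G →ₗ[ℂ] EC G) : Prop :=
  Continuous[smoothTop ℂ G ℂ, smoothTop ℂ G ℂ] D ∧
    ∀ f : EC G, tsupport ((D f : G → ℂ)) ⊆ tsupport (f : G → ℂ)

/-- `D` commutes with all left translations. -/
def IsLeftInvariant (D : EC G →ₗ[ℂ] EC G) : Prop :=
  ∀ (x : G) (f : EC G), D (translE x f) = translE x (D f)

end ComplexValued

/-!
For `t ≠ 0` the remainder is forced: `χ(t, g) = t⁻¹ (h(g X(t)) - h(g)) - (D_X h)(g)`, and we put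
`χ(0, g) = 0`. Continuity away from `t = 0` is clear. Near `(0, g₀)`, test against a continuous
seminorm `p`: Hahn–Banach gives a continuous functional `ℓ` with `|ℓ| ≤ p` and
`ℓ(χ(t, g)) = p(χ(t, g))`, and the scalar mean value theorem for `s ↦ ℓ(h(g X(s)))` yields
`p(χ(t, g)) ≤ p(D(g X(c)) - D(g))` for some `|c| < |t|`, which is small by joint continuity of
`(c, g) ↦ D(g X(c))`.
-/

theorem Seminorm.exists_strongDual_eq_and_abs_le {E : Type*} [AddCommGroup E] [Module ℝ E]
    [TopologicalSpace E] [PolynormableSpace ℝ E] {p : Seminorm ℝ E} (hp : Continuous p) (y : E) :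
    ∃ ℓ : StrongDual ℝ E, ℓ y = p y ∧ ∀ x, |ℓ x| ≤ p x := by
  rcases eq_or_ne y 0 with rfl | hy
  · exact ⟨0, by simp, fun x => by simp⟩
  let f : E →ₗ.[ℝ] ℝ := .mkSpanSingleton y (p y) hy
  have hdom (c : ℝ) : c • y ∈ f.domain :=
    Submodule.smul_mem _ c (Submodule.mem_span_singleton_self y)
  have hf (c : ℝ) : f ⟨c • y, hdom c⟩ = c * p y := LinearPMap.mkSpanSingleton'_apply _ _ _ c _
  obtain ⟨ℓ, hℓf, hℓp⟩ :=
    Module.Dual.exists_continuous_extension_of_le_seminorm_real f.domain f.toFun hp <| by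
      rintro ⟨x, hx⟩
      obtain ⟨c, rfl⟩ := Submodule.mem_span_singleton.1 hx
      calc f ⟨c • y, hx⟩ = c * p y := hf c
        _ ≤ |c| * p y := mul_le_mul_of_nonneg_right (le_abs_self c) (apply_nonneg p y)
        _ = p (c • y) := by rw [map_smul_eq_mul, Real.norm_eq_abs]
  refine ⟨ℓ, ?_, hℓp⟩
  simpa [one_smul, one_mul] using (hℓf ⟨1 • y, hdom 1⟩).trans (hf 1)

theorem exists_abs_lt_hasDerivAt_eq_slope {f f' : ℝ → ℝ} (hf : ∀ r, HasDerivAt f (f' r) r)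
    {t : ℝ} (ht : t ≠ 0) : ∃ c, |c| < |t| ∧ f' c = (f t - f 0) / t := by
  have hfc : Continuous f := continuous_iff_continuousAt.2 fun r => (hf r).continuousAt
  rcases ht.lt_or_gt with htn | htp
  · obtain ⟨c, ⟨htc, hc0⟩, hc⟩ :=
      exists_hasDerivAt_eq_slope f f' htn hfc.continuousOn fun r _ => hf r
    refine ⟨c, by rw [abs_of_neg hc0, abs_of_neg htn]; linarith, ?_⟩
    rw [hc, zero_sub, div_neg, ← neg_div, neg_sub]
  · obtain ⟨c, ⟨hc0, hct⟩, hc⟩ :=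
      exists_hasDerivAt_eq_slope f f' htp hfc.continuousOn fun r _ => hf r
    exact ⟨c, by rwa [abs_of_pos hc0, abs_of_pos htp], by rw [hc, sub_zero]⟩

theorem eventually_forall_abs_le_mem_of_mem_nhds {α : Type*} [TopologicalSpace α]
    {U : Set (ℝ × α)} {a : α} (hU : U ∈ 𝓝 ((0 : ℝ), a)) :
    ∀ᶠ q in 𝓝 ((0 : ℝ), a), ∀ c, |c| ≤ |q.1| → (c, q.2) ∈ U := by
  obtain ⟨u, hu, v, hv, huv⟩ := mem_nhds_prod_iff.1 hU
  obtain ⟨δ, hδ, hball⟩ := Metric.mem_nhds_iff.1 hu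
  filter_upwards [prod_mem_nhds (Metric.ball_mem_nhds 0 hδ) hv] with q ⟨hq₁, hq₂⟩ c hc
  refine huv ⟨hball ?_, hq₂⟩
  rw [mem_ball_zero_iff, Real.norm_eq_abs] at hq₁ ⊢
  exact hc.trans_lt hq₁

section LieTaylor

variable {G : Type*} [Group G] [TopologicalSpace G] [IsTopologicalGroup G]
variable {Y : Type*} [AddCommGroup Y] [Module ℝ Y] [TopologicalSpace Y]

theorem OneParam.apply_zero (γ : ↥(OneParam G)) : γ.1 0 = 1 :=
  mul_left_cancel (a := γ.1 0) (by rw [mul_one, ← γ.2 0 0, add_zero])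

theorem HasLieDeriv.hasDerivAt_comp {φ : G → Y} {γ : ↥(OneParam G)} {g : G} {s : ℝ} {v : Y}
    (ℓ : StrongDual ℝ Y) (hφ : HasLieDeriv φ γ (g * γ.1 s) v) :
    HasDerivAt (fun r => ℓ (φ (g * γ.1 r))) (ℓ v) s := by
  rw [hasDerivAt_iff_tendsto_slope_zero]
  refine ((ℓ.continuous.tendsto v).comp hφ).congr fun r => ?_
  simp only [Function.comp_apply, map_smul, map_sub, γ.2 s r, mul_assoc]

theorem exists_abs_lt_seminorm_slope_sub_le [PolynormableSpace ℝ Y] {φ D : G → Y}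
    {γ : ↥(OneParam G)} (hφ : ∀ g, HasLieDeriv φ γ g (D g)) {p : Seminorm ℝ Y}
    (hp : Continuous p) (g : G) {t : ℝ} (ht : t ≠ 0) :
    ∃ c, |c| < |t| ∧ p (t⁻¹ • (φ (g * γ.1 t) - φ g) - D g) ≤ p (D (g * γ.1 c) - D g) := by
  obtain ⟨ℓ, hℓy, hℓp⟩ :=
    p.exists_strongDual_eq_and_abs_le hp (t⁻¹ • (φ (g * γ.1 t) - φ g) - D g)
  obtain ⟨c, hct, hc⟩ :=
    exists_abs_lt_hasDerivAt_eq_slope (fun r => (hφ (g * γ.1 r)).hasDerivAt_comp ℓ) ht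
  refine ⟨c, hct, ?_⟩
  calc p (t⁻¹ • (φ (g * γ.1 t) - φ g) - D g) = ℓ (D (g * γ.1 c) - D g) := by
        rw [← hℓy, map_sub, map_sub, hc, map_smul, map_sub, OneParam.apply_zero γ, mul_one,
          smul_eq_mul, div_eq_inv_mul]
    _ ≤ p (D (g * γ.1 c) - D g) := (le_abs_self _).trans (hℓp _)

noncomputable def lieTaylorRemainder (φ D : G → Y) (γ : ↥(OneParam G)) (q : ℝ × G) : Y :=
  if q.1 = 0 then 0 else q.1⁻¹ • (φ (q.2 * γ.1 q.1) - φ q.2) - D q.2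

theorem lieTaylorRemainder_zero (φ D : G → Y) (γ : ↥(OneParam G)) (g : G) :
    lieTaylorRemainder φ D γ (0, g) = 0 :=
  if_pos rfl

theorem apply_mul_eq_add_smul_add_smul_lieTaylorRemainder (φ D : G → Y) (γ : ↥(OneParam G))
    (t : ℝ) (g : G) : φ (g * γ.1 t) = φ g + t • D g + t • lieTaylorRemainder φ D γ (t, g) := by
  rcases eq_or_ne t 0 with rfl | ht
  · simp [OneParam.apply_zero γ]
  · rw [lieTaylorRemainder, if_neg ht, smul_sub, smul_inv_smul₀ ht]
    abel

theorem continuousAt_lieTaylorRemainder_of_ne_zero [ContinuousSub Y] [ContinuousSMul ℝ Y]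
    {φ D : G → Y} (hφ : Continuous φ) (hD : Continuous D) (γ : ↥(OneParam G)) {t : ℝ}
    (ht : t ≠ 0) (g : G) : ContinuousAt (lieTaylorRemainder φ D γ) (t, g) := by
  have hcont : ContinuousAt (fun q : ℝ × G => q.1⁻¹ • (φ (q.2 * γ.1 q.1) - φ q.2) - D q.2)
      (t, g) := by
    refine ((continuousAt_fst.inv₀ ht).smul ?_).sub (hD.comp continuous_snd).continuousAt
    exact ((hφ.comp (continuous_snd.mul (γ.1.continuous.comp continuous_fst))).sub
      (hφ.comp continuous_snd)).continuousAt
  refine hcont.congr ?_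
  filter_upwards [(isOpen_compl_singleton.preimage continuous_fst).mem_nhds ht] with q hq
  exact (if_neg hq).symm

theorem continuousAt_lieTaylorRemainder_zero [ContinuousSub Y] [PolynormableSpace ℝ Y]
    {φ D : G → Y} (hD : Continuous D) {γ : ↥(OneParam G)}
    (hφ : ∀ g, HasLieDeriv φ γ g (D g)) (g : G) :
    ContinuousAt (lieTaylorRemainder φ D γ) (0, g) := by
  rw [ContinuousAt, lieTaylorRemainder_zero, (PolynormableSpace.withSeminorms ℝ Y).tendsto_nhds]
  rintro ⟨p, hp⟩ ε hε
  have hΨ : Continuous fun q : ℝ × G => p (D (q.2 * γ.1 q.1) - D q.2) :=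
    hp.comp ((hD.comp (continuous_snd.mul (γ.1.continuous.comp continuous_fst))).sub
      (hD.comp continuous_snd))
  have hU : {q : ℝ × G | p (D (q.2 * γ.1 q.1) - D q.2) < ε} ∈ 𝓝 ((0 : ℝ), g) :=
    (hΨ.isOpen_preimage _ isOpen_Iio).mem_nhds (by simp [OneParam.apply_zero γ, hε])
  filter_upwards [eventually_forall_abs_le_mem_of_mem_nhds hU] with ⟨t, g'⟩ hq
  rw [sub_zero]
  rcases eq_or_ne t 0 with rfl | ht
  · simpa [lieTaylorRemainder_zero] using hε
  · obtain ⟨c, hct, hle⟩ := exists_abs_lt_seminorm_slope_sub_le hφ hp g' ht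
    rw [lieTaylorRemainder, if_neg ht]
    exact hle.trans_lt (hq c hct.le)

end LieTaylor

/-- First-order Taylor expansion with continuous remainder, for a continuous function
whose derivative along the one-parameter subgroup `X` exists and is continuous. -/
theorem taylor_expansion_order_one
    {H : Type*} [Group H] [TopologicalSpace H] [IsTopologicalGroup H]
    {Y : Type*} [AddCommGroup Y] [Module ℝ Y] [TopologicalSpace Y]
    [IsTopologicalAddGroup Y] [ContinuousSMul ℝ Y] [LocallyConvexSpace ℝ Y]
    (h : H → Y) (hh : Continuous h) (X : ↥(OneParam H)) (D : H → Y)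
    (hD : Continuous D) (hd : ∀ g : H, HasLieDeriv h X g (D g)) :
    ∃ χ : ℝ × H → Y, Continuous χ ∧ (∀ g : H, χ (0, g) = 0) ∧
      ∀ (t : ℝ) (g : H), h (g * X.1 t) = h g + t • D g + t • χ (t, g) := by
  refine ⟨lieTaylorRemainder h D X, continuous_iff_continuousAt.2 ?_, lieTaylorRemainder_zero h D X,
    apply_mul_eq_add_smul_add_smul_lieTaylorRemainder h D X⟩
  rintro ⟨t, g⟩
  rcases eq_or_ne t 0 with rfl | ht
  · exact continuousAt_lieTaylorRemainder_zero hD hd g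
  · exact continuousAt_lieTaylorRemainder_of_ne_zero hh hD X ht g
end

section
/- Let G be a topological group, Y a locally convex space, V ⊆ G open, and φ : V → Y a function of class C¹ along one-parameter subgroups (i.e. (g,γ) ↦ (D_γ φ)(g) := lim_{t→0}(φ(gγ(t)) − φ(g))/t exists and is continuous on V × L(G)). Then for x ∈ G with x⁻¹ ∈ V and γ ∈ L(G), the function φ̌(y) := φ(y⁻¹) satisfies (D_γ φ̌)(x) = −(D_{Ad_G(x)γ} φ)(x⁻¹). -/
set_option linter.unusedSectionVars false

open Filter Topology Set

/-! The difference quotient of `y ↦ φ y⁻¹` along `γ` at `x` is minus the difference quotient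
of `φ` along `Ad_G(x)γ` at `x⁻¹`, taken at `-t`, because `(x γ(t))⁻¹ = x⁻¹ (x γ(-t) x⁻¹)`. -/

namespace OneParam

variable {G : Type*} [Group G] [TopologicalSpace G] [IsTopologicalGroup G]

theorem apply_zero_s5 (γ : ↥(OneParam G)) : γ.1 0 = 1 := by
  have h := γ.2 0 0
  rw [add_zero] at h
  exact mul_eq_left.mp h.symm

theorem apply_neg (γ : ↥(OneParam G)) (t : ℝ) : γ.1 (-t) = (γ.1 t)⁻¹ := by
  have h := γ.2 t (-t)
  rw [add_neg_cancel, apply_zero_s5] at h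
  exact eq_inv_of_mul_eq_one_right h.symm

end OneParam

theorem inv_mul_adOP_apply_neg {G : Type*} [Group G] [TopologicalSpace G] [IsTopologicalGroup G]
    (x : G) (γ : ↥(OneParam G)) (t : ℝ) : x⁻¹ * (adOP x γ).1 (-t) = (x * γ.1 t)⁻¹ := by
  simp only [adOP, ContinuousMap.coe_mk, OneParam.apply_neg, mul_inv_rev]
  group

open scoped Pointwise in
theorem tendsto_neg_nhdsNE_zero : Tendsto (fun t : ℝ => -t) (𝓝[≠] 0) (𝓝[≠] 0) := by
  simpa using (tendsto_map : Tendsto Neg.neg (𝓝[≠] (0 : ℝ)) (-(𝓝[≠] 0)))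

theorem HasLieDeriv.comp_inv {G : Type*} [Group G] [TopologicalSpace G] [IsTopologicalGroup G]
    {Y : Type*} [AddCommGroup Y] [Module ℝ Y] [TopologicalSpace Y] [ContinuousNeg Y]
    {φ : G → Y} {x : G} {γ : ↥(OneParam G)} {v : Y} (h : HasLieDeriv φ (adOP x γ) x⁻¹ v) :
    HasLieDeriv (fun y => φ y⁻¹) γ x (-v) := by
  refine ((h.comp tendsto_neg_nhdsNE_zero).neg).congr fun t => ?_
  simp only [Function.comp_apply, inv_mul_adOP_apply_neg, inv_neg, neg_smul, neg_neg]

theorem check_derivative_formula_general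
    {G : Type*} [Group G] [TopologicalSpace G] [IsTopologicalGroup G]
    {Y : Type*} [AddCommGroup Y] [Module ℝ Y] [TopologicalSpace Y]
    [IsTopologicalAddGroup Y]
    (V : Set G) (φ : G → Y) (Dφ : G → ↥(OneParam G) → Y)
    (hd : ∀ g ∈ V, ∀ γ : ↥(OneParam G), HasLieDeriv φ γ g (Dφ g γ))
    (x : G) (hx : x⁻¹ ∈ V) (γ : ↥(OneParam G)) :
    HasLieDeriv (fun y => φ y⁻¹) γ x (-(Dφ x⁻¹ (adOP x γ))) :=
  (hd x⁻¹ hx (adOP x γ)).comp_inv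

/-- For a `C¹` function `φ` on an open set `V` and `φ̌(y) = φ(y⁻¹)`, one has
`(D_γ φ̌)(x) = -(D_{Ad_G(x)γ} φ)(x⁻¹)`. -/
theorem check_derivative_formula
    {G : Type*} [Group G] [TopologicalSpace G] [IsTopologicalGroup G]
    {Y : Type*} [AddCommGroup Y] [Module ℝ Y] [TopologicalSpace Y]
    [IsTopologicalAddGroup Y] [ContinuousSMul ℝ Y] [LocallyConvexSpace ℝ Y]
    (V : Set G) (hV : IsOpen V) (φ : G → Y) (Dφ : G → ↥(OneParam G) → Y)
    (hd : ∀ g ∈ V, ∀ γ : ↥(OneParam G), HasLieDeriv φ γ g (Dφ g γ))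
    (hc : ContinuousOn (fun p : G × ↥(OneParam G) => Dφ p.1 p.2) (V ×ˢ Set.univ))
    (x : G) (hx : x⁻¹ ∈ V) (γ : ↥(OneParam G)) :
    HasLieDeriv (fun y => φ y⁻¹) γ x (-(Dφ x⁻¹ (adOP x γ))) :=
  check_derivative_formula_general V φ Dφ hd x hx γ
end

section
/- Let H be a topological group, Y a locally convex space, n ≥ 2, f ∈ C^n(H,Y), and γ₁,…,γ_n ∈ L(H) such that γ_i and γ_{i+1} commute (γ_i(t)γ_{i+1}(s) = γ_{i+1}(s)γ_i(t) for all s,t). Then the iterated derivative (D^λ)^n f(x; γ_n,…,γ_{i+1},γ_i,…,γ₁) is unchanged if γ_i and γ_{i+1} are swapped: (D^λ)^n f(x; γ_n,…,γ_{i+1},γ_i,…,γ₁) = (D^λ)^n f(x; γ_n,…,γ_i,γ_{i+1},…,γ₁) for all x ∈ H. -/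
set_option linter.unusedSectionVars false

open Filter Topology Set

/-! Along commuting one-parameter subgroups `α`, `β`, the map `(t, s) ↦ x α(t) β(s)` turns the
Lie derivatives along `α` and `β` into partial derivatives in `t` and `s`. After composing with
a continuous functional (these separate points by Hahn–Banach), symmetry of the mixed second
derivative is Schwarz's theorem, proved by expanding the second difference
`g t t - g t 0 - g 0 t + g 0 0` with the mean value theorem in both orders. Since
`F (k + 1) x (snoc δ α)` depends only on the function `F k · δ` and on `α`, a swap of two adjacent
directions propagates to all higher orders.
-/

theorem exists_mem_Ioo_sub_eq_mul {f f' : ℝ → ℝ} (hf : ∀ x, HasDerivAt f (f' x) x) {t : ℝ}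
    (ht : 0 < t) : ∃ ξ ∈ Ioo 0 t, f t - f 0 = t * f' ξ := by
  obtain ⟨ξ, hξ, hslope⟩ := exists_hasDerivAt_eq_slope f f' ht
    (fun y _ => (hf y).continuousAt.continuousWithinAt) (fun y _ => hf y)
  refine ⟨ξ, hξ, ?_⟩
  rw [hslope, sub_zero, mul_div_cancel₀ _ ht.ne']

section MixedPartials

variable {g u v w w' : ℝ → ℝ → ℝ}
  (hu : ∀ t s, HasDerivAt (g · s) (u t s) t) (hv : ∀ t s, HasDerivAt (g t ·) (v t s) s)
  (hw : ∀ t s, HasDerivAt (u t ·) (w t s) s) (hw' : ∀ t s, HasDerivAt (v · s) (w' t s) t)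
include hu hv hw hw'

theorem exists_mixed_partials_eq {t : ℝ} (ht : 0 < t) :
    ∃ p ∈ Ioo 0 t ×ˢ Ioo 0 t, ∃ p' ∈ Ioo 0 t ×ˢ Ioo 0 t, w p.1 p.2 = w' p'.1 p'.2 := by
  obtain ⟨ξ, hξ, e₁⟩ := exists_mem_Ioo_sub_eq_mul (fun τ => (hu τ t).sub (hu τ 0)) ht
  obtain ⟨η, hη, e₂⟩ := exists_mem_Ioo_sub_eq_mul (hw ξ) ht
  obtain ⟨η', hη', e₃⟩ := exists_mem_Ioo_sub_eq_mul (fun σ => (hv t σ).sub (hv 0 σ)) ht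
  obtain ⟨ξ', hξ', e₄⟩ := exists_mem_Ioo_sub_eq_mul (fun τ => hw' τ η') ht
  refine ⟨(ξ, η), ⟨hξ, hη⟩, (ξ', η'), ⟨hξ', hη'⟩, ?_⟩
  have : t * (t * w ξ η) = t * (t * w' ξ' η') := by
    rw [← e₂, ← e₁, ← e₄, ← e₃]
    simp only [Pi.sub_apply]
    ring
  exact mul_left_cancel₀ ht.ne' (mul_left_cancel₀ ht.ne' this)

theorem mixed_partials_eq (hwc : ContinuousAt (Function.uncurry w) 0)
    (hw'c : ContinuousAt (Function.uncurry w') 0) : w 0 0 = w' 0 0 := by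
  refine tendsto_nhds_unique_of_frequently_eq (l := 𝓝 (0 : (ℝ × ℝ) × (ℝ × ℝ)))
    (hwc.tendsto.comp (continuous_fst.tendsto _))
    (hw'c.tendsto.comp (continuous_snd.tendsto _)) ?_
  refine Metric.nhds_basis_ball.frequently_iff.2 fun ε hε => ?_
  obtain ⟨p, hp, p', hp', heq⟩ := exists_mixed_partials_eq hu hv hw hw' hε
  have hIoo : Ioo 0 ε ⊆ Metric.ball (0 : ℝ) ε := by
    rw [Real.ball_eq_Ioo]
    exact Ioo_subset_Ioo (by linarith) (by linarith)
  refine ⟨(p, p'), ?_, heq⟩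
  simp only [← Prod.mk_zero_zero, ← ball_prod_same]
  exact ⟨⟨hIoo hp.1, hIoo hp.2⟩, hIoo hp'.1, hIoo hp'.2⟩

end MixedPartials

section LieDerivatives

variable {G : Type*} [Group G] [TopologicalSpace G] [IsTopologicalGroup G]
variable {Y : Type*} [AddCommGroup Y] [Module ℝ Y] [TopologicalSpace Y]

theorem OneParam.apply_add (γ : ↥(OneParam G)) (t s : ℝ) : γ.1 (t + s) = γ.1 t * γ.1 s :=
  γ.2 t s

theorem HasLieDeriv.hasDerivAt_comp_s11 {ψ : G → Y} {γ : ↥(OneParam G)} {c : ℝ → G} {t : ℝ} {d : Y}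
    (h : HasLieDeriv ψ γ (c t) d) (hc : ∀ s, c (t + s) = c t * γ.1 s) (ℓ : StrongDual ℝ Y) :
    HasDerivAt (fun τ => ℓ (ψ (c τ))) (ℓ d) t := by
  rw [hasDerivAt_iff_tendsto_slope_zero]
  refine ((ℓ.continuous.tendsto _).comp h).congr fun s => ?_
  simp only [Function.comp_apply, hc, map_smul, map_sub, smul_eq_mul]

theorem HasLieDeriv.eq_of_commute [IsTopologicalAddGroup Y] [ContinuousSMul ℝ Y]
    [LocallyConvexSpace ℝ Y] [T1Space Y] {φ u v w w' : G → Y} {α β : ↥(OneParam G)}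
    (hu : ∀ g, HasLieDeriv φ α g (u g)) (hv : ∀ g, HasLieDeriv φ β g (v g))
    (hw : ∀ g, HasLieDeriv u β g (w g)) (hw' : ∀ g, HasLieDeriv v α g (w' g))
    (hcomm : ∀ t s, α.1 t * β.1 s = β.1 s * α.1 t) {x : G}
    (hwc : ContinuousAt w x) (hw'c : ContinuousAt w' x) : w x = w' x := by
  by_contra hne
  obtain ⟨ℓ, hℓ⟩ := SeparatingDual.exists_separating_of_ne (R := ℝ) hne
  apply hℓ
  set q : ℝ → ℝ → G := fun t s => x * α.1 t * β.1 s
  have hqα : ∀ t s h, q (t + h) s = q t s * α.1 h := fun t s h => by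
    simp only [q, OneParam.apply_add, mul_assoc, hcomm]
  have hqβ : ∀ t s h, q t (s + h) = q t s * β.1 h := fun t s h => by
    simp only [q, OneParam.apply_add, mul_assoc]
  have hq₀ : q 0 0 = x := by simp [q, OneParam.apply_zero]
  have hqc : ContinuousAt (Function.uncurry q) 0 := by fun_prop
  have hcont {z : G → Y} (hz : ContinuousAt z x) :
      ContinuousAt (Function.uncurry fun t s => ℓ (z (q t s))) 0 :=
    ℓ.continuous.continuousAt.comp (hz.comp_of_eq hqc hq₀)
  simpa [hq₀] using mixed_partials_eq (g := fun t s => ℓ (φ (q t s)))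
    (fun t s => (hu _).hasDerivAt_comp_s11 (hqα t s) ℓ) (fun t s => (hv _).hasDerivAt_comp_s11 (hqβ t s) ℓ)
    (fun t s => (hw _).hasDerivAt_comp_s11 (hqβ t s) ℓ) (fun t s => (hw' _).hasDerivAt_comp_s11 (hqα t s) ℓ)
    (hcont hwc) (hcont hw'c)

end LieDerivatives

theorem Fin.snoc_comp_swap_castSucc {α : Type*} {m : ℕ} (δ : Fin m → α) (a : α) (i j : Fin m) :
    (Fin.snoc δ a : Fin (m + 1) → α) ∘ Equiv.swap i.castSucc j.castSucc
      = Fin.snoc (δ ∘ Equiv.swap i j) a := by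
  funext x
  cases x using Fin.lastCases with
  | last =>
    rw [Function.comp_apply, Equiv.swap_apply_of_ne_of_ne (Fin.castSucc_lt_last i).ne'
      (Fin.castSucc_lt_last j).ne', Fin.snoc_last, Fin.snoc_last]
  | cast x => simp [Fin.castSucc_injective _ |>.swap_apply]

theorem Fin.snoc_snoc_comp_swap {α : Type*} {k : ℕ} (δ : Fin k → α) (a b : α) :
    (Fin.snoc (Fin.snoc δ a) b : Fin (k + 2) → α) ∘
        Equiv.swap (Fin.last k).castSucc (Fin.last (k + 1)) = Fin.snoc (Fin.snoc δ b) a := by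
  funext x
  cases x using Fin.lastCases with
  | last => simp
  | cast x =>
    cases x using Fin.lastCases with
    | last => simp
    | cast x =>
      rw [Function.comp_apply, Equiv.swap_apply_of_ne_of_ne (by simp [Fin.ext_iff, x.2.ne])
        (by simp [Fin.ext_iff]; omega)]
      simp

namespace CnSeq

variable {G : Type*} [Group G] [TopologicalSpace G] [IsTopologicalGroup G]
variable {Y : Type*} [AddCommGroup Y] [Module ℝ Y] [TopologicalSpace Y]
variable {n k : ℕ} {f : G → Y} {F : ∀ k : ℕ, G → (Fin k → ↥(OneParam G)) → Y}

theorem hasLieDeriv_snoc (hF : CnSeq n f F) (hk : k < n) (δ : Fin k → ↥(OneParam G))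
    (α : ↥(OneParam G)) (g : G) : HasLieDeriv (F k · δ) α g (F (k + 1) g (Fin.snoc δ α)) := by
  simpa using hF.2.1 k hk g (Fin.snoc δ α)

theorem continuous_apply (hF : CnSeq n f F) (hk : k ≤ n) (δ : Fin k → ↥(OneParam G)) :
    Continuous (F k · δ) :=
  (hF.2.2 k hk).comp (continuous_id.prodMk continuous_const)

theorem apply_snoc_congr [T2Space Y] (hF : CnSeq n f F) (hk : k < n)
    {δ δ' : Fin k → ↥(OneParam G)} (h : ∀ g, F k g δ = F k g δ') (α : ↥(OneParam G)) (x : G) :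
    F (k + 1) x (Fin.snoc δ α) = F (k + 1) x (Fin.snoc δ' α) := by
  have hδ' := hF.hasLieDeriv_snoc hk δ' α x
  rw [← funext h] at hδ'
  exact tendsto_nhds_unique (hF.hasLieDeriv_snoc hk δ α x) hδ'

theorem apply_snoc_snoc_comm [IsTopologicalAddGroup Y] [ContinuousSMul ℝ Y]
    [LocallyConvexSpace ℝ Y] [T1Space Y] (hF : CnSeq n f F) (hk : k + 2 ≤ n)
    (δ : Fin k → ↥(OneParam G)) {α β : ↥(OneParam G)}
    (hcomm : ∀ t s, α.1 t * β.1 s = β.1 s * α.1 t) (x : G) :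
    F (k + 2) x (Fin.snoc (Fin.snoc δ α) β) = F (k + 2) x (Fin.snoc (Fin.snoc δ β) α) :=
  HasLieDeriv.eq_of_commute (hF.hasLieDeriv_snoc (by omega) δ α)
    (hF.hasLieDeriv_snoc (by omega) δ β) (hF.hasLieDeriv_snoc (by omega) _ β)
    (hF.hasLieDeriv_snoc (by omega) _ α) hcomm
    ((hF.continuous_apply hk _).continuousAt) ((hF.continuous_apply hk _).continuousAt)

theorem apply_comp_swap [IsTopologicalAddGroup Y] [ContinuousSMul ℝ Y]
    [LocallyConvexSpace ℝ Y] [T2Space Y] (hF : CnSeq n f F) {m : ℕ} (hm : m ≤ n)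
    (γ : Fin m → ↥(OneParam G)) {i j : Fin m} (hij : (i : ℕ) + 1 = j)
    (hcomm : ∀ t s, (γ i).1 t * (γ j).1 s = (γ j).1 s * (γ i).1 t) (x : G) :
    F m x γ = F m x (γ ∘ Equiv.swap i j) := by
  induction m generalizing x with
  | zero => exact i.elim0
  | succ m ih =>
    obtain ⟨δ, a, rfl⟩ : ∃ δ a, Fin.snoc δ a = γ := ⟨_, _, Fin.snoc_init_self γ⟩
    cases j using Fin.lastCases with
    | last =>
      obtain ⟨k, rfl⟩ : ∃ k, m = k + 1 := ⟨m - 1, by simp only [Fin.val_last] at hij; omega⟩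
      obtain rfl : i = (Fin.last k).castSucc := Fin.ext (by simpa using hij)
      obtain ⟨δ, b, rfl⟩ : ∃ δ' b, Fin.snoc δ' b = δ := ⟨_, _, Fin.snoc_init_self δ⟩
      rw [Fin.snoc_snoc_comp_swap]
      exact hF.apply_snoc_snoc_comm hm δ (by simpa using hcomm) x
    | cast j =>
      cases i using Fin.lastCases with
      | last => simp only [Fin.val_last, Fin.val_castSucc] at hij; omega
      | cast i =>
        rw [Fin.snoc_comp_swap_castSucc]
        exact hF.apply_snoc_congr hm (fun g => ih (by omega) δ (by simpa using hij)
          (by simpa using hcomm) g) a x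

end CnSeq

theorem iterated_deriv_swap_commuting_general
    {H : Type*} [Group H] [TopologicalSpace H] [IsTopologicalGroup H]
    {Y : Type*} [AddCommGroup Y] [Module ℝ Y] [TopologicalSpace Y]
    [IsTopologicalAddGroup Y] [ContinuousSMul ℝ Y] [LocallyConvexSpace ℝ Y]
    [T2Space Y]
    (n : ℕ) (f : H → Y)
    (F : ∀ k : ℕ, H → (Fin k → ↥(OneParam H)) → Y) (hF : CnSeq n f F)
    (γ : Fin n → ↥(OneParam H)) (i j : Fin n) (hij : (i : ℕ) + 1 = (j : ℕ))
    (hcomm : ∀ t s : ℝ, (γ i).1 t * (γ j).1 s = (γ j).1 s * (γ i).1 t) (x : H) :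
    F n x γ = F n x (γ ∘ ⇑(Equiv.swap i j)) :=
  hF.apply_comp_swap le_rfl γ hij hcomm x

/-- The iterated derivative of a `C^n` function is unchanged under swapping two
adjacent directions which commute. -/
theorem iterated_deriv_swap_commuting
    {H : Type*} [Group H] [TopologicalSpace H] [IsTopologicalGroup H]
    {Y : Type*} [AddCommGroup Y] [Module ℝ Y] [TopologicalSpace Y]
    [IsTopologicalAddGroup Y] [ContinuousSMul ℝ Y] [LocallyConvexSpace ℝ Y]
    [T2Space Y]
    (n : ℕ) (hn : 2 ≤ n) (f : H → Y)
    (F : ∀ k : ℕ, H → (Fin k → ↥(OneParam H)) → Y) (hF : CnSeq n f F)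
    (γ : Fin n → ↥(OneParam H)) (i j : Fin n) (hij : (i : ℕ) + 1 = (j : ℕ))
    (hcomm : ∀ t s : ℝ, (γ i).1 t * (γ j).1 s = (γ j).1 s * (γ i).1 t) (x : H) :
    F n x γ = F n x (γ ∘ ⇑(Equiv.swap i j)) :=
  iterated_deriv_swap_commuting_general n f F hF γ i j hij hcomm x
end

section
/- Let G, H be topological groups and Y a locally convex space. For φ ∈ C^∞(H × G, Y), the map φ̃ : H → E(G,Y) defined by φ̃(x)(g) = φ(x,g) is continuous, where E(G,Y) carries the topology of the seminorms p_{K₁,K₂}(f) = sup{|(D^λ_γ f)(g)| : γ ∈ K₁, g ∈ K₂} over compact K₁ ⊆ L(G)^k and K₂ ⊆ G. -/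
set_option linter.unusedSectionVars false

open Filter Topology Set

/-! The derivatives of the slice `g ↦ φ (x, g)` along `γ` are those of `φ` along the
one-parameter subgroup `t ↦ (1, γ t)`, evaluated at `(x, g)`; hence they depend jointly
continuously on `(x, g, γ)`. Currying a jointly continuous function gives a continuous map
into `C(G × L(G)^k, Y)` with the compact-open topology, and that topology is the one of uniform
convergence on compacts that defines `E(G, Y)`. -/

namespace OneParam

variable {G K : Type*} [Group G] [TopologicalSpace G] [IsTopologicalGroup G]
  [Group K] [TopologicalSpace K] [IsTopologicalGroup K]

def map (ψ : G →ₜ* K) (γ : ↥(OneParam G)) : ↥(OneParam K) :=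
  ⟨ψ.toContinuousMap.comp γ.1, fun t s => by simp [γ.2 t s]⟩

@[simp]
theorem map_apply (ψ : G →ₜ* K) (γ : ↥(OneParam G)) (t : ℝ) : (map ψ γ).1 t = ψ (γ.1 t) :=
  rfl

@[fun_prop]
theorem continuous_map (ψ : G →ₜ* K) : Continuous (map ψ) :=
  ((ContinuousMap.continuous_postcomp ψ.toContinuousMap).comp continuous_subtype_val).subtype_mk _

end OneParam

namespace SmoothSeq

variable {G K : Type*} [Group G] [TopologicalSpace G] [IsTopologicalGroup G]
  [Group K] [TopologicalSpace K] [IsTopologicalGroup K]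
  {Y : Type*} [AddCommGroup Y] [Module ℝ Y] [TopologicalSpace Y]
  {φ : K → Y} {F : ∀ k : ℕ, K → (Fin k → ↥(OneParam K)) → Y}

theorem zero_eq (hF : SmoothSeq φ F) (x : K) (γ : Fin 0 → ↥(OneParam K)) : F 0 x γ = φ x :=
  (hF 0).1 x γ

theorem hasLieDeriv (hF : SmoothSeq φ F) (k : ℕ) (x : K) (γ : Fin (k + 1) → ↥(OneParam K)) :
    HasLieDeriv (fun y => F k y fun i => γ i.castSucc) (γ (Fin.last k)) x (F (k + 1) x γ) :=
  (hF (k + 1)).2.1 k k.lt_succ_self x γ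

theorem continuous (hF : SmoothSeq φ F) (k : ℕ) :
    Continuous fun p : K × (Fin k → ↥(OneParam K)) => F k p.1 p.2 :=
  (hF k).2.2 k le_rfl

theorem of_forall (h₀ : ∀ x γ, F 0 x γ = φ x)
    (hD : ∀ k x (γ : Fin (k + 1) → ↥(OneParam K)),
      HasLieDeriv (fun y => F k y fun i => γ i.castSucc) (γ (Fin.last k)) x (F (k + 1) x γ))
    (hC : ∀ k, Continuous fun p : K × (Fin k → ↥(OneParam K)) => F k p.1 p.2) :
    SmoothSeq φ F :=
  fun _ => ⟨h₀, fun k _ => hD k, fun k _ => hC k⟩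

theorem comp_mul_hom (hF : SmoothSeq φ F) (ψ : G →ₜ* K) (x : K) :
    SmoothSeq (fun g => φ (x * ψ g))
      (fun k g γ => F k (x * ψ g) fun i => OneParam.map ψ (γ i)) := by
  refine of_forall (fun g γ => hF.zero_eq _ _) (fun k g γ => ?_) (fun k => ?_)
  · refine (hF.hasLieDeriv k (x * ψ g) fun i => OneParam.map ψ (γ i)).congr fun t => ?_
    simp only [OneParam.map_apply, map_mul, mul_assoc]
  · exact (hF.continuous k).comp
      (f := fun p : G × (Fin k → ↥(OneParam G)) => (x * ψ p.1, fun i => OneParam.map ψ (p.2 i)))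
      (by fun_prop)

variable {H : Type*} [Group H] [TopologicalSpace H] [IsTopologicalGroup H]
  {φ : H × G → Y} {F : ∀ k : ℕ, H × G → (Fin k → ↥(OneParam (H × G))) → Y}

theorem prod_slice (hF : SmoothSeq φ F) (x : H) :
    SmoothSeq (fun g => φ (x, g))
      (fun k g γ => F k (x, g) fun i => OneParam.map (ContinuousMonoidHom.inr H G) (γ i)) := by
  simpa using hF.comp_mul_hom (ContinuousMonoidHom.inr H G) (x, 1)

end SmoothSeq

section SmoothTop

variable {𝕜 : Type*} [Ring 𝕜]
  {G : Type*} [Group G] [TopologicalSpace G] [IsTopologicalGroup G]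
  {Y : Type*} [AddCommGroup Y] [Module ℝ Y] [UniformSpace Y] [ContinuousAdd Y] [T2Space Y]
  [Module 𝕜 Y] [SMulCommClass ℝ 𝕜 Y] [ContinuousConstSMul 𝕜 Y]
  {X : Type*} [TopologicalSpace X]

theorem continuous_smoothTop_of_smoothSeq {f : X → G → Y}
    {F : X → ∀ k : ℕ, G → (Fin k → ↥(OneParam G)) → Y} (hF : ∀ x, SmoothSeq (f x) (F x))
    (hcont : ∀ k, Continuous fun q : X × G × (Fin k → ↥(OneParam G)) => F q.1 k q.2.1 q.2.2) :
    Continuous[inferInstance, smoothTop 𝕜 G Y]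
      fun x => (⟨f x, _, hF x⟩ : ↥(SmoothCarrier 𝕜 G Y)) := by
  let := smoothTop 𝕜 G Y
  have hind : IsInducing fun f : ↥(SmoothCarrier 𝕜 G Y) => fun k : ℕ =>
      UniformOnFun.ofFun {S : Set (G × (Fin k → ↥(OneParam G))) | IsCompact S}
        fun p => itD (f : G → Y) k p.1 p.2 := ⟨rfl⟩
  refine hind.continuous_iff.mpr (continuous_pi fun k => ?_)
  simp only [Function.comp_def, itD_spec (hF _)]
  exact ContinuousMap.isUniformEmbedding_toUniformOnFunIsCompact.uniformContinuous.continuous.comp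
    (ContinuousMap.curry ⟨_, hcont k⟩).continuous

end SmoothTop

theorem tilde_map_continuous_general
    {H : Type*} [Group H] [TopologicalSpace H] [IsTopologicalGroup H]
    {G : Type*} [Group G] [TopologicalSpace G] [IsTopologicalGroup G]
    {Y : Type*} [AddCommGroup Y] [Module ℝ Y] [UniformSpace Y]
    [IsUniformAddGroup Y] [ContinuousSMul ℝ Y] [T2Space Y]
    (φ : H × G → Y) (hφ : IsCInf φ) :
    ∃ h : ∀ x : H, IsCInf fun g => φ (x, g),
      Continuous[inferInstance, smoothTop ℝ G Y]
        fun x : H => (⟨fun g => φ (x, g), h x⟩ : ↥(SmoothCarrier ℝ G Y)) := by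
  obtain ⟨F, hF⟩ := hφ
  refine ⟨_, continuous_smoothTop_of_smoothSeq hF.prod_slice fun k => ?_⟩
  exact (hF.continuous k).comp (f := fun q : H × G × (Fin k → ↥(OneParam G)) =>
    ((q.1, q.2.1), fun i => OneParam.map (ContinuousMonoidHom.inr H G) (q.2.2 i))) (by fun_prop)

/-- If `φ ∈ C^∞(H × G, Y)`, then `φ̃ : H → E(G, Y)`, `φ̃(x)(g) = φ(x, g)`, is continuous
for the seminorm topology on `E(G, Y)`. -/
theorem tilde_map_continuous
    {H : Type*} [Group H] [TopologicalSpace H] [IsTopologicalGroup H]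
    {G : Type*} [Group G] [TopologicalSpace G] [IsTopologicalGroup G]
    {Y : Type*} [AddCommGroup Y] [Module ℝ Y] [UniformSpace Y]
    [IsUniformAddGroup Y] [ContinuousSMul ℝ Y] [LocallyConvexSpace ℝ Y] [T2Space Y]
    (φ : H × G → Y) (hφ : IsCInf φ) :
    ∃ h : ∀ x : H, IsCInf fun g => φ (x, g),
      Continuous[inferInstance, smoothTop ℝ G Y]
        fun x : H => (⟨fun g => φ (x, g), h x⟩ : ↥(SmoothCarrier ℝ G Y)) :=
  tilde_map_continuous_general φ hφ
end
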